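/- arXiv:2602.11770 — 8 statements merged into one kernel-verified Lean document; each statement's English description precedes it below -/
import Mathlib

section
/- Let d* be a minimizer of d ↦ ⟨g,d⟩ over D₁ and set ω = |⟨g,d*⟩|. Let η > 0 and α > 0 satisfy α·ω ≤ η. Suppose s ∈ ℝⁿ is either (i) a minimizer of s ↦ ⟨g,s⟩ over D(α·ω), or (ii) d* ≠ 0 and s = (α·ω/‖d*‖_∞)·d*. Then |⟨g,s⟩| ≥ (α/max(η,1))·ω². -/
/-!
Since `x ≥ 0` and `D₁` is convex and contains `0`, the scaled step `t • d*` lies in `D(t)` for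
`0 ≤ t ≤ 1`. With `t = α ω / max(η, 1) ≤ min(1, α ω)` it is a competitor in `D(α ω)`, so in case (i)
`⟪g, s⟫ ≤ t ⟪g, d*⟫ = -t ω`. In case (ii), `|⟪g, s⟫| = α ω² / ‖d*‖_∞ ≥ α ω²`.
-/

open scoped RealInnerProductSpace

/-- The sup-norm on `ℝⁿ` (viewing a Euclidean vector as a plain function). -/
noncomputable def supNorm {n : ℕ} (d : EuclideanSpace ℝ (Fin n)) : ℝ :=
  ‖(WithLp.equiv 2 (Fin n → ℝ)) d‖

lemma supNorm_smul {n : ℕ} (t : ℝ) (d : EuclideanSpace ℝ (Fin n)) :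
    supNorm (t • d) = |t| * supNorm d := by
  simp [supNorm, norm_smul, Real.norm_eq_abs]

lemma supNorm_pos {n : ℕ} {d : EuclideanSpace ℝ (Fin n)} (hd : d ≠ 0) : 0 < supNorm d := by
  rw [supNorm, norm_pos_iff]
  simpa using hd

section FeasibleSet

variable {n m : ℕ} (J : EuclideanSpace ℝ (Fin n) →L[ℝ] EuclideanSpace ℝ (Fin m))
  (x : EuclideanSpace ℝ (Fin n))

/-- The set `D(r)`; in particular `D₁ = feasibleSet J x 1`. -/
def feasibleSet (r : ℝ) : Set (EuclideanSpace ℝ (Fin n)) :=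
  {d | J d = 0 ∧ (∀ i, 0 ≤ x i + d i) ∧ supNorm d ≤ r}

variable {J x}

lemma zero_mem_feasibleSet (hx : ∀ i, 0 ≤ x i) {r : ℝ} (hr : 0 ≤ r) :
    0 ∈ feasibleSet J x r :=
  ⟨map_zero J, by simpa using hx, by simpa [supNorm] using hr⟩

lemma feasibleSet_mono {r r' : ℝ} (h : r ≤ r') : feasibleSet J x r ⊆ feasibleSet J x r' :=
  fun _ ⟨hJ, hx, hr⟩ => ⟨hJ, hx, hr.trans h⟩

lemma smul_mem_feasibleSet (hx : ∀ i, 0 ≤ x i) {d : EuclideanSpace ℝ (Fin n)} {r t : ℝ}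
    (hd : d ∈ feasibleSet J x r) (ht0 : 0 ≤ t) (ht1 : t ≤ 1) :
    t • d ∈ feasibleSet J x (t * r) := by
  obtain ⟨hJ, hxd, hr⟩ := hd
  refine ⟨by rw [map_smul, hJ, smul_zero], fun i => ?_, ?_⟩
  · -- `x + t • d = (1 - t) • x + t • (x + d)`
    have h := add_nonneg (mul_nonneg (sub_nonneg.2 ht1) (hx i)) (mul_nonneg ht0 (hxd i))
    simp only [PiLp.smul_apply, smul_eq_mul]
    linarith
  · rw [supNorm_smul, abs_of_nonneg ht0]
    exact mul_le_mul_of_nonneg_left hr ht0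

lemma mul_abs_inner_le_of_isMinOn (hx : ∀ i, 0 ≤ x i) {g dstar s : EuclideanSpace ℝ (Fin n)}
    {r t : ℝ} (hdstar : IsMinOn (⟪g, ·⟫) (feasibleSet J x 1) dstar)
    (hdstar_mem : dstar ∈ feasibleSet J x 1) (hs : IsMinOn (⟪g, ·⟫) (feasibleSet J x r) s)
    (ht0 : 0 ≤ t) (ht1 : t ≤ 1) (htr : t ≤ r) :
    t * |⟪g, dstar⟫| ≤ |⟪g, s⟫| := by
  have hdstar_nonpos : ⟪g, dstar⟫ ≤ 0 := by
    simpa using isMinOn_iff.1 hdstar 0 (zero_mem_feasibleSet hx zero_le_one)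
  have hscaled : t • dstar ∈ feasibleSet J x r :=
    feasibleSet_mono (by linarith) (smul_mem_feasibleSet hx hdstar_mem ht0 ht1)
  have hs_le : ⟪g, s⟫ ≤ t * ⟪g, dstar⟫ := by
    simpa [real_inner_smul_right] using isMinOn_iff.1 hs _ hscaled
  calc t * |⟪g, dstar⟫| = -(t * ⟪g, dstar⟫) := by rw [abs_of_nonpos hdstar_nonpos]; ring
    _ ≤ -⟪g, s⟫ := neg_le_neg hs_le
    _ ≤ |⟪g, s⟫| := neg_le_abs _

end FeasibleSet

lemma mul_abs_inner_le_abs_inner_div_supNorm_smul {n : ℕ} (g : EuclideanSpace ℝ (Fin n))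
    {d : EuclideanSpace ℝ (Fin n)} (hd : d ≠ 0) (hd1 : supNorm d ≤ 1) {c : ℝ} (hc : 0 ≤ c) :
    c * |⟪g, d⟫| ≤ |⟪g, (c / supNorm d) • d⟫| := by
  have hN := supNorm_pos hd
  rw [real_inner_smul_right, abs_mul, abs_of_nonneg (div_nonneg hc hN.le)]
  exact mul_le_mul_of_nonneg_right (le_div_self hc hN hd1) (abs_nonneg _)

theorem stmt0_general {n m : ℕ}
    (x g : EuclideanSpace ℝ (Fin n))
    (J : EuclideanSpace ℝ (Fin n) →L[ℝ] EuclideanSpace ℝ (Fin m))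
    (hx : ∀ i, 0 ≤ x i)
    -- `dstar` minimizes `d ↦ ⟪g, d⟫` over `D₁`
    (dstar : EuclideanSpace ℝ (Fin n))
    (hd1 : J dstar = 0) (hd2 : ∀ i, 0 ≤ x i + dstar i) (hd3 : supNorm dstar ≤ 1)
    (hdmin : ∀ d : EuclideanSpace ℝ (Fin n),
      J d = 0 → (∀ i, 0 ≤ x i + d i) → supNorm d ≤ 1 → ⟪g, dstar⟫ ≤ ⟪g, d⟫)
    (ω : ℝ) (hω : ω = |⟪g, dstar⟫|)
    (η α : ℝ) (hα : 0 < α) (hαω : α * ω ≤ η)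
    (s : EuclideanSpace ℝ (Fin n))
    (hs :
      -- (i) `s` minimizes `⟪g, ·⟫` over `D(α·ω)`
      (J s = 0 ∧ (∀ i, 0 ≤ x i + s i) ∧ supNorm s ≤ α * ω ∧
        ∀ d : EuclideanSpace ℝ (Fin n),
          J d = 0 → (∀ i, 0 ≤ x i + d i) → supNorm d ≤ α * ω → ⟪g, s⟫ ≤ ⟪g, d⟫)
      ∨
      -- (ii) `s` is the rescaled `dstar`
      (dstar ≠ 0 ∧ s = (α * ω / supNorm dstar) • dstar)) :
    (α / max η 1) * ω ^ 2 ≤ |⟪g, s⟫| := by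
  have hω0 : 0 ≤ ω := hω ▸ abs_nonneg _
  have hM : 1 ≤ max η 1 := le_max_right η 1
  rcases hs with ⟨-, -, -, hsmin⟩ | ⟨hne, rfl⟩
  · have key := mul_abs_inner_le_of_isMinOn hx
      (isMinOn_iff.2 fun d hd => hdmin d hd.1 hd.2.1 hd.2.2) ⟨hd1, hd2, hd3⟩
      (isMinOn_iff.2 fun d hd => hsmin d hd.1 hd.2.1 hd.2.2) (t := α * ω / max η 1)
      (by positivity) (div_le_one_of_le₀ (hαω.trans (le_max_left η 1)) (by positivity))
      (div_le_self (by positivity) hM)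
    rw [← hω] at key
    calc α / max η 1 * ω ^ 2 = α * ω / max η 1 * ω := by ring
      _ ≤ _ := key
  · have key := mul_abs_inner_le_abs_inner_div_supNorm_smul g hne hd3 (c := α * ω) (by positivity)
    rw [← hω] at key
    calc α / max η 1 * ω ^ 2 ≤ α * ω ^ 2 :=
          mul_le_mul_of_nonneg_right (div_le_self hα.le hM) (sq_nonneg ω)
      _ = α * ω * ω := by ring
      _ ≤ _ := key

theorem stmt0 {n m : ℕ}
    (x g : EuclideanSpace ℝ (Fin n))
    (J : EuclideanSpace ℝ (Fin n) →L[ℝ] EuclideanSpace ℝ (Fin m))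
    (hx : ∀ i, 0 ≤ x i)
    -- `dstar` minimizes `d ↦ ⟪g, d⟫` over `D₁`
    (dstar : EuclideanSpace ℝ (Fin n))
    (hd1 : J dstar = 0) (hd2 : ∀ i, 0 ≤ x i + dstar i) (hd3 : supNorm dstar ≤ 1)
    (hdmin : ∀ d : EuclideanSpace ℝ (Fin n),
      J d = 0 → (∀ i, 0 ≤ x i + d i) → supNorm d ≤ 1 → ⟪g, dstar⟫ ≤ ⟪g, d⟫)
    (ω : ℝ) (hω : ω = |⟪g, dstar⟫|)
    (η α : ℝ) (hη : 0 < η) (hα : 0 < α) (hαω : α * ω ≤ η)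
    (s : EuclideanSpace ℝ (Fin n))
    (hs :
      -- (i) `s` minimizes `⟪g, ·⟫` over `D(α·ω)`
      (J s = 0 ∧ (∀ i, 0 ≤ x i + s i) ∧ supNorm s ≤ α * ω ∧
        ∀ d : EuclideanSpace ℝ (Fin n),
          J d = 0 → (∀ i, 0 ≤ x i + d i) → supNorm d ≤ α * ω → ⟪g, s⟫ ≤ ⟪g, d⟫)
      ∨
      -- (ii) `s` is the rescaled `dstar`
      (dstar ≠ 0 ∧ s = (α * ω / supNorm dstar) • dstar)) :
    (α / max η 1) * ω ^ 2 ≤ |⟪g, s⟫| :=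
  stmt0_general x g J hx dstar hd1 hd2 hd3 hdmin ω hω η α hα hαω s hs
end

section
/- Let η > 0, ς ∈ (0,1/2], and α > 0 with α ≤ η/√ς. Let q ∈ K satisfy ‖(x − g) − q‖ ≤ ‖(x − g) − z‖ for all z ∈ K (i.e. q is the point of K closest to x − g), set p = q − x, π = ‖p‖, and s = min(α,1)·p. Then |⟨g,s⟩| ≥ (√ς/max(η,1))·α·π². -/
/-!
The step `p = q - x` is a projected-gradient step, so the variational inequality characterising
the projection `q` onto the convex set `K`, tested at `x ∈ K`, gives `⟪g, p⟫ ≤ -‖p‖²`. Hence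
`|⟪g, s⟫| ≥ |min α 1| π²`, and for `α > 0` we have `√ς / max η 1 · α ≤ min α 1` because
`√ς ≤ 1` when `α ≤ 1` and `α √ς ≤ η` when `α ≥ 1`.
-/

open scoped RealInnerProductSpace

theorem convex_setOf_map_sub_eq_zero_and_nonneg {ι F : Type*} [AddCommGroup F] [Module ℝ F]
    (J : EuclideanSpace ℝ ι →ₗ[ℝ] F) (x : EuclideanSpace ℝ ι) :
    Convex ℝ {z : EuclideanSpace ℝ ι | J (z - x) = 0 ∧ ∀ i, 0 ≤ z i} := by
  have hfiber : Convex ℝ {z : EuclideanSpace ℝ ι | J (z - x) = 0} := by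
    simpa only [Set.preimage, Set.mem_singleton_iff, map_sub, sub_eq_zero] using
      (convex_singleton (J x)).linear_preimage J
  have horthant : Convex ℝ {z : EuclideanSpace ℝ ι | ∀ i, 0 ≤ z i} := by
    intro a ha b hb s t hs ht _ i
    simp only [PiLp.add_apply, PiLp.smul_apply, smul_eq_mul]
    exact add_nonneg (mul_nonneg hs (ha i)) (mul_nonneg ht (hb i))
  exact hfiber.inter horthant

section

variable {E : Type*} [NormedAddCommGroup E] [InnerProductSpace ℝ E]

theorem real_inner_sub_le_zero_of_forall_norm_sub_le {K : Set E} (hK : Convex ℝ K) {u v : E}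
    (hv : v ∈ K) (hmin : ∀ w ∈ K, ‖u - v‖ ≤ ‖u - w‖) : ∀ w ∈ K, ⟪u - v, w - v⟫ ≤ 0 :=
  have : Nonempty K := ⟨⟨v, hv⟩⟩
  (norm_eq_iInf_iff_real_inner_le_zero hK hv).1 <|
    le_antisymm (le_ciInf fun w => hmin w w.2)
      (ciInf_le (f := fun w : K => ‖u - w‖) ⟨0, Set.forall_mem_range.2 fun _ => norm_nonneg _⟩
        ⟨v, hv⟩)

theorem real_inner_le_neg_norm_sq_of_forall_norm_sub_le {K : Set E} (hK : Convex ℝ K)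
    {x g q : E} (hx : x ∈ K) (hq : q ∈ K) (hmin : ∀ z ∈ K, ‖(x - g) - q‖ ≤ ‖(x - g) - z‖) :
    ⟪g, q - x⟫ ≤ -‖q - x‖ ^ 2 := by
  have hvar := real_inner_sub_le_zero_of_forall_norm_sub_le hK hq hmin x hx
  have hexpand : ⟪(x - g) - q, x - q⟫ = ‖q - x‖ ^ 2 + ⟪g, q - x⟫ := by
    rw [show (x - g) - q = -((q - x) + g) by abel, show x - q = -(q - x) by abel, inner_neg_neg,
      inner_add_left, real_inner_self_eq_norm_sq, real_inner_comm]
  linarith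

end

theorem sqrt_div_max_mul_le_abs_min {η ς α : ℝ} (hς : ς ≤ 1) (hαη : α ≤ η / Real.sqrt ς) :
    Real.sqrt ς / max η 1 * α ≤ |min α 1| := by
  have hM : 1 ≤ max η 1 := le_max_right _ _
  rcases le_or_gt α 0 with hα | hα
  · exact (mul_nonpos_of_nonneg_of_nonpos (by positivity) hα).trans (abs_nonneg _)
  -- `η / 0 = 0`, so `√ς = 0` would force `α ≤ 0`
  have hsqrt : 0 < Real.sqrt ς := by
    by_contra! h
    rw [le_antisymm h (Real.sqrt_nonneg ς), div_zero] at hαη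
    linarith
  rw [abs_of_pos (lt_min hα one_pos), div_mul_eq_mul_div, div_le_iff₀ (by linarith)]
  rcases le_total α 1 with h1 | h1
  · rw [min_eq_left h1]
    nlinarith [Real.sqrt_le_one.2 hς]
  · rw [min_eq_right h1]
    nlinarith [(le_div_iff₀ hsqrt).1 hαη, le_max_left η 1]

theorem stmt1_general {n m : ℕ}
    (x g : EuclideanSpace ℝ (Fin n))
    (J : EuclideanSpace ℝ (Fin n) →L[ℝ] EuclideanSpace ℝ (Fin m))
    (hx : ∀ i, 0 ≤ x i)
    (η ς α : ℝ) (hς2 : ς ≤ 1/2)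
    (hαη : α ≤ η / Real.sqrt ς)
    (K : Set (EuclideanSpace ℝ (Fin n)))
    (hK : K = {z | J (z - x) = 0 ∧ ∀ i, 0 ≤ z i})
    -- `q` is the point of `K` closest to `x - g`
    (q : EuclideanSpace ℝ (Fin n)) (hqK : q ∈ K)
    (hq : ∀ z ∈ K, ‖(x - g) - q‖ ≤ ‖(x - g) - z‖)
    (p : EuclideanSpace ℝ (Fin n)) (hp : p = q - x)
    (π : ℝ) (hπ : π = ‖p‖)
    (s : EuclideanSpace ℝ (Fin n)) (hs : s = min α 1 • p) :
    (Real.sqrt ς / max η 1) * α * π ^ 2 ≤ |⟪g, s⟫| := by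
  subst hp hπ hs
  have hxK : x ∈ K := hK ▸ ⟨by rw [sub_self, map_zero], hx⟩
  have hKconvex : Convex ℝ K := hK ▸ convex_setOf_map_sub_eq_zero_and_nonneg J.toLinearMap x
  have hdescent : ‖q - x‖ ^ 2 ≤ |⟪g, q - x⟫| :=
    (le_neg.1 (real_inner_le_neg_norm_sq_of_forall_norm_sub_le hKconvex hxK hqK hq)).trans
      (neg_le_abs _)
  calc Real.sqrt ς / max η 1 * α * ‖q - x‖ ^ 2
      ≤ |min α 1| * |⟪g, q - x⟫| :=
        mul_le_mul (sqrt_div_max_mul_le_abs_min (by linarith) hαη) hdescent (by positivity)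
          (abs_nonneg _)
    _ = |⟪g, min α 1 • (q - x)⟫| := by rw [real_inner_smul_right, abs_mul]

theorem stmt1 {n m : ℕ}
    (x g : EuclideanSpace ℝ (Fin n))
    (J : EuclideanSpace ℝ (Fin n) →L[ℝ] EuclideanSpace ℝ (Fin m))
    (hx : ∀ i, 0 ≤ x i)
    (η ς α : ℝ) (hη : 0 < η) (hς1 : 0 < ς) (hς2 : ς ≤ 1/2)
    (hα : 0 < α) (hαη : α ≤ η / Real.sqrt ς)
    (K : Set (EuclideanSpace ℝ (Fin n)))
    (hK : K = {z | J (z - x) = 0 ∧ ∀ i, 0 ≤ z i})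
    -- `q` is the point of `K` closest to `x - g`
    (q : EuclideanSpace ℝ (Fin n)) (hqK : q ∈ K)
    (hq : ∀ z ∈ K, ‖(x - g) - q‖ ≤ ‖(x - g) - z‖)
    (p : EuclideanSpace ℝ (Fin n)) (hp : p = q - x)
    (π : ℝ) (hπ : π = ‖p‖)
    (s : EuclideanSpace ℝ (Fin n)) (hs : s = min α 1 • p) :
    (Real.sqrt ς / max η 1) * α * π ^ 2 ≤ |⟪g, s⟫| :=
  stmt1_general x g J hx η ς α hς2 hαη K hK q hqK hq p hp π hπ s hs
end

section
/- Let g : ℝⁿ → ℝⁿ and, for each x, a linear map J(x) : ℝⁿ → ℝᵐ (adjoint J(x)*) satisfy, for all x, y ∈ O: ‖g(x)‖ ≤ κ_g, ‖g(x) − g(y)‖ ≤ L_g‖x − y‖, ‖J(x)‖ ≤ κ_J, ‖J(x) − J(y)‖ ≤ L_J‖x − y‖ (operator norms), and ‖J(x)*u‖ ≥ σ₀‖u‖ for all u ∈ ℝᵐ, where σ₀ ∈ (0,1] and κ_g, κ_J, L_g, L_J > 0. For x ∈ O let λ̂(x) ∈ ℝᵐ be the unique solution of J(x)J(x)*λ̂(x)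 = −J(x)g(x). Then for all x, y ∈ O, ‖λ̂(x) − λ̂(y)‖ ≤ L_λ‖x − y‖, where L_λ = (1/σ₀²)·(2κ_g·κ_J²·L_J/σ₀² + κ_g·L_J + κ_J·L_g). -/
/-!
Subtracting the normal equations at `y` and at `x` gives
`J(x) J(x)* (λ̂ x - λ̂ y) = (J(y) g(y) - J(x) g(x)) + (J(y) J(y)* - J(x) J(x)*) λ̂ y`.
Since `⟪u, J J* u⟫ = ‖J* u‖² ≥ σ₀² ‖u‖²`, the operator `J(x) J(x)*` is coercive with constant `σ₀²`,
so `σ₀² ‖λ̂ x - λ̂ y‖` is bounded by the norm of the right-hand side, which is Lipschitz in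
`x - y` with a constant involving `‖λ̂ y‖`; the same coercivity at `y` gives `σ₀² ‖λ̂ y‖ ≤ κ_J κ_g`.
-/

open scoped RealInnerProductSpace

open ContinuousLinearMap

section AdjointPerturbation

variable {E F : Type*} [NormedAddCommGroup E] [InnerProductSpace ℝ E]
  [NormedAddCommGroup F] [InnerProductSpace ℝ F]

theorem norm_apply_sub_apply_le (A B : E →L[ℝ] F) (v w : E) :
    ‖B w - A v‖ ≤ ‖B - A‖ * ‖w‖ + ‖A‖ * ‖w - v‖ := by
  have hsplit : B w - A v = (B - A) w + A (w - v) := by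
    simp only [sub_apply, map_sub]
    abel
  rw [hsplit]
  exact (norm_add_le _ _).trans (add_le_add ((B - A).le_opNorm w) (A.le_opNorm (w - v)))

variable [CompleteSpace E] [CompleteSpace F]

theorem inner_apply_adjoint_self (A : E →L[ℝ] F) (u : F) :
    ⟪u, A (adjoint A u)⟫ = ‖adjoint A u‖ ^ 2 := by
  rw [← adjoint_inner_left, real_inner_self_eq_norm_sq]

theorem sq_mul_norm_le_of_apply_adjoint_eq {A : E →L[ℝ] F} {σ : ℝ} (hσ : 0 ≤ σ)
    (hA : ∀ u, σ * ‖u‖ ≤ ‖adjoint A u‖) {l w : F} (h : A (adjoint A l) = w) :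
    σ ^ 2 * ‖l‖ ≤ ‖w‖ := by
  have hcoer : σ ^ 2 * ‖l‖ ^ 2 ≤ ‖l‖ * ‖w‖ :=
    calc σ ^ 2 * ‖l‖ ^ 2 = (σ * ‖l‖) ^ 2 := by ring
      _ ≤ ‖adjoint A l‖ ^ 2 := pow_le_pow_left₀ (by positivity) (hA l) 2
      _ = ⟪l, w⟫ := by rw [← h, inner_apply_adjoint_self]
      _ ≤ ‖l‖ * ‖w‖ := real_inner_le_norm l w
  rcases (norm_nonneg l).eq_or_lt with hl | hl
  · rw [← hl, mul_zero]
    exact norm_nonneg w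
  · nlinarith

theorem norm_comp_adjoint_sub_comp_adjoint_le (A B : E →L[ℝ] F) :
    ‖B ∘L adjoint B - A ∘L adjoint A‖ ≤ (‖A‖ + ‖B‖) * ‖B - A‖ := by
  have hsplit :
      B ∘L adjoint B - A ∘L adjoint A = (B - A) ∘L adjoint B + A ∘L adjoint (B - A) := by
    rw [map_sub, sub_comp, comp_sub]
    abel
  calc ‖B ∘L adjoint B - A ∘L adjoint A‖
      ≤ ‖B - A‖ * ‖adjoint B‖ + ‖A‖ * ‖adjoint (B - A)‖ := by
        rw [hsplit]
        exact (norm_add_le _ _).trans (add_le_add (opNorm_comp_le _ _) (opNorm_comp_le _ _))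
    _ = (‖A‖ + ‖B‖) * ‖B - A‖ := by
        rw [LinearIsometryEquiv.norm_map, LinearIsometryEquiv.norm_map]
        ring

theorem sq_mul_norm_sub_le_of_apply_adjoint_eq_neg {A B : E →L[ℝ] F} {σ : ℝ} (hσ : 0 ≤ σ)
    (hA : ∀ u, σ * ‖u‖ ≤ ‖adjoint A u‖) {l₁ l₂ : F} {v w : E}
    (h₁ : A (adjoint A l₁) = -A v) (h₂ : B (adjoint B l₂) = -B w) :
    σ ^ 2 * ‖l₁ - l₂‖
      ≤ ‖B - A‖ * ‖w‖ + ‖A‖ * ‖w - v‖ + (‖A‖ + ‖B‖) * ‖B - A‖ * ‖l₂‖ := by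
  have hdiff : A (adjoint A (l₁ - l₂))
      = (B w - A v) + (B ∘L adjoint B - A ∘L adjoint A) l₂ := by
    simp only [map_sub, sub_apply, coe_comp, Function.comp_apply, h₁, h₂]
    abel
  calc σ ^ 2 * ‖l₁ - l₂‖
      ≤ ‖B w - A v‖ + ‖(B ∘L adjoint B - A ∘L adjoint A) l₂‖ :=
        (sq_mul_norm_le_of_apply_adjoint_eq hσ hA hdiff).trans (norm_add_le _ _)
    _ ≤ _ := add_le_add (norm_apply_sub_apply_le A B v w)
        (((B ∘L adjoint B - A ∘L adjoint A).le_opNorm l₂).trans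
          (mul_le_mul_of_nonneg_right (norm_comp_adjoint_sub_comp_adjoint_le A B)
            (norm_nonneg l₂)))

end AdjointPerturbation

theorem stmt5_general {n m : ℕ}
    (g : EuclideanSpace ℝ (Fin n) → EuclideanSpace ℝ (Fin n))
    (J : EuclideanSpace ℝ (Fin n) → (EuclideanSpace ℝ (Fin n) →L[ℝ] EuclideanSpace ℝ (Fin m)))
    (O : Set (EuclideanSpace ℝ (Fin n)))
    (σ₀ κg κJ Lg LJ : ℝ) (hσ0 : 0 < σ₀)
    (hκJ : 0 < κJ) (hLJ : 0 < LJ)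
    (hgb : ∀ x ∈ O, ‖g x‖ ≤ κg)
    (hgL : ∀ x ∈ O, ∀ y ∈ O, ‖g x - g y‖ ≤ Lg * ‖x - y‖)
    (hJb : ∀ x ∈ O, ‖J x‖ ≤ κJ)
    (hJL : ∀ x ∈ O, ∀ y ∈ O, ‖J x - J y‖ ≤ LJ * ‖x - y‖)
    (hJinj : ∀ x ∈ O, ∀ u : EuclideanSpace ℝ (Fin m),
      σ₀ * ‖u‖ ≤ ‖(ContinuousLinearMap.adjoint (J x)) u‖)
    -- `lamhat x` is the (unique) least-squares multiplier at `x`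
    (lamhat : EuclideanSpace ℝ (Fin n) → EuclideanSpace ℝ (Fin m))
    (hlam : ∀ x ∈ O,
      (J x) ((ContinuousLinearMap.adjoint (J x)) (lamhat x)) = -((J x) (g x))) :
    ∀ x ∈ O, ∀ y ∈ O,
      ‖lamhat x - lamhat y‖
        ≤ (1 / σ₀ ^ 2) * (2 * κg * κJ ^ 2 * LJ / σ₀ ^ 2 + κg * LJ + κJ * Lg) * ‖x - y‖ := by
  intro x hx y hy
  have hσ2 : 0 < σ₀ ^ 2 := by positivity
  have hlamy : ‖lamhat y‖ ≤ κJ * κg / σ₀ ^ 2 := by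
    rw [le_div_iff₀ hσ2, mul_comm]
    refine (sq_mul_norm_le_of_apply_adjoint_eq hσ0.le (hJinj y hy) (hlam y hy)).trans ?_
    rw [norm_neg]
    exact ((J y).le_opNorm (g y)).trans
      (mul_le_mul (hJb y hy) (hgb y hy) (norm_nonneg _) hκJ.le)
  have hJyx : ‖J y - J x‖ ≤ LJ * ‖x - y‖ := by rw [norm_sub_rev]; exact hJL x hx y hy
  have hgyx : ‖g y - g x‖ ≤ Lg * ‖x - y‖ := by rw [norm_sub_rev]; exact hgL x hx y hy
  have hgy := hgb y hy
  have hJx := hJb x hx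
  have hJy := hJb y hy
  have hpert :=
    sq_mul_norm_sub_le_of_apply_adjoint_eq_neg hσ0.le (hJinj x hx) (hlam x hx) (hlam y hy)
  calc ‖lamhat x - lamhat y‖ = (1 / σ₀ ^ 2) * (σ₀ ^ 2 * ‖lamhat x - lamhat y‖) := by
        field_simp
    _ ≤ (1 / σ₀ ^ 2) * (LJ * ‖x - y‖ * κg + κJ * (Lg * ‖x - y‖)
          + (κJ + κJ) * (LJ * ‖x - y‖) * (κJ * κg / σ₀ ^ 2)) := by
        gcongr
        refine hpert.trans ?_
        gcongr
    _ = _ := by field_simp; ring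

theorem stmt5 {n m : ℕ}
    (g : EuclideanSpace ℝ (Fin n) → EuclideanSpace ℝ (Fin n))
    (J : EuclideanSpace ℝ (Fin n) → (EuclideanSpace ℝ (Fin n) →L[ℝ] EuclideanSpace ℝ (Fin m)))
    -- `O` is the nonnegative orthant
    (O : Set (EuclideanSpace ℝ (Fin n))) (hO : O = {x | ∀ i, 0 ≤ x i})
    (σ₀ κg κJ Lg LJ : ℝ) (hσ0 : 0 < σ₀) (hσ1 : σ₀ ≤ 1)
    (hκg : 0 < κg) (hκJ : 0 < κJ) (hLg : 0 < Lg) (hLJ : 0 < LJ)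
    (hgb : ∀ x ∈ O, ‖g x‖ ≤ κg)
    (hgL : ∀ x ∈ O, ∀ y ∈ O, ‖g x - g y‖ ≤ Lg * ‖x - y‖)
    (hJb : ∀ x ∈ O, ‖J x‖ ≤ κJ)
    (hJL : ∀ x ∈ O, ∀ y ∈ O, ‖J x - J y‖ ≤ LJ * ‖x - y‖)
    (hJinj : ∀ x ∈ O, ∀ u : EuclideanSpace ℝ (Fin m),
      σ₀ * ‖u‖ ≤ ‖(ContinuousLinearMap.adjoint (J x)) u‖)
    -- `lamhat x` is the (unique) least-squares multiplier at `x`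
    (lamhat : EuclideanSpace ℝ (Fin n) → EuclideanSpace ℝ (Fin m))
    (hlam : ∀ x ∈ O,
      (J x) ((ContinuousLinearMap.adjoint (J x)) (lamhat x)) = -((J x) (g x))) :
    ∀ x ∈ O, ∀ y ∈ O,
      ‖lamhat x - lamhat y‖
        ≤ (1 / σ₀ ^ 2) * (2 * κg * κJ ^ 2 * LJ / σ₀ ^ 2 + κg * LJ + κJ * Lg) * ‖x - y‖ :=
  stmt5_general g J O σ₀ κg κJ Lg LJ hσ0 hκJ hLJ hgb hgL hJb hJL hJinj lamhat hlam
end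

section
/- Let θ_N ≥ 1, κ_n ∈ (0,1/2), ξ ∈ (0,1], κ_ω > 0, η > 0, and set ρ = (1/(κ_n·ξ))·[(κ_g + κ_c·L_λ)·θ_N + (L_L/2 + L_λ·L_c)·θ_N²·κ_ω + η]. Suppose x ∈ O, ω ∈ ℝ with ξ‖c(x)‖ ≤ ω ≤ κ_ω, and s ∈ ℝⁿ satisfies x + s ∈ O, ‖s‖ ≤ θ_N·ω, and (1/2)‖c(x+s)‖² ≤ (1/2)‖c(x)‖² − κ_n·ω². Then ψ(x+s) − ψ(x) ≤ −η·ω. -/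
/-!
Split the increment of `ψ` at the fixed multiplier `λ̂(x)`:
`ψ(x+s) - ψ(x) = [L(x+s, λ̂(x)) - L(x, λ̂(x))] + ⟪λ̂(x+s) - λ̂(x), c(x+s)⟫ + ρ (‖c(x+s)‖ - ‖c(x)‖)`.
The descent lemma bounds the first term by `κ_g ‖s‖ + L_L/2 ‖s‖²`, Lipschitz continuity of `λ̂`
and `c` bound the second by `L_λ ‖s‖ (κ_c + L_c ‖s‖)`, and the sufficient decrease of `‖c‖²`
together with `ξ ‖c(x)‖ ≤ ω` makes `‖c‖` drop by at least `κ_n ξ ω`. With `‖s‖ ≤ θ_N ω` and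
`ω ≤ κ_ω`, the first two terms are at most `(ρ κ_n ξ - η) ω`, and `ρ` is chosen to make this work.
-/

open scoped RealInnerProductSpace
open Set

section
variable {E : Type*} [NormedAddCommGroup E] [InnerProductSpace ℝ E] [CompleteSpace E]

theorem HasGradientAt.hasDerivAt_comp_add_smul {φ : E → ℝ} {G x d : E} {t : ℝ}
    (h : HasGradientAt φ G (x + t • d)) :
    HasDerivAt (fun u : ℝ => φ (x + u • d)) ⟪G, d⟫ t := by
  have hγ : HasDerivAt (fun u : ℝ => x + u • d) d t := by
    simpa using ((hasDerivAt_id t).smul_const d).const_add x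
  have := h.hasFDerivAt.comp_hasDerivAt t hγ
  simp only [InnerProductSpace.toDual_apply_apply] at this
  exact this

theorem Convex.le_add_inner_add_half_mul_sq {K : Set E} (hK : Convex ℝ K) {φ : E → ℝ}
    {G : E → E} {L : ℝ} {x y : E} (hφ : ∀ z ∈ K, HasGradientAt φ (G z) z)
    (hG : ∀ z ∈ K, ‖G z - G x‖ ≤ L * ‖z - x‖) (hx : x ∈ K) (hy : y ∈ K) :
    φ y ≤ φ x + ⟪G x, y - x⟫ + L / 2 * ‖y - x‖ ^ 2 := by
  set d := y - x
  have hseg : ∀ t ∈ Icc (0 : ℝ) 1, x + t • d ∈ K := fun t ht => hK.add_smul_sub_mem hx hy ht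
  set k : ℝ → ℝ := fun t => φ (x + t • d) - t * ⟪G x, d⟫ - L / 2 * t ^ 2 * ‖d‖ ^ 2
  have hk : ∀ t ∈ Icc (0 : ℝ) 1,
      HasDerivAt k (⟪G (x + t • d), d⟫ - ⟪G x, d⟫ - L * t * ‖d‖ ^ 2) t := by
    intro t ht
    refine ((((hφ _ (hseg t ht)).hasDerivAt_comp_add_smul).fun_sub
      ((hasDerivAt_id' t).mul_const ⟪G x, d⟫)).fun_sub
      (((hasDerivAt_pow 2 t).const_mul (L / 2)).mul_const (‖d‖ ^ 2))).congr_deriv ?_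
    simp only [one_mul, Nat.cast_ofNat, Nat.add_one_sub_one, pow_one]
    ring
  have hk' : ∀ t ∈ Icc (0 : ℝ) 1, ⟪G (x + t • d), d⟫ - ⟪G x, d⟫ - L * t * ‖d‖ ^ 2 ≤ 0 := by
    intro t ht
    have hlip := hG _ (hseg t ht)
    rw [add_sub_cancel_left, norm_smul, Real.norm_of_nonneg ht.1] at hlip
    rw [sub_nonpos]
    calc ⟪G (x + t • d), d⟫ - ⟪G x, d⟫ = ⟪G (x + t • d) - G x, d⟫ := (inner_sub_left ..).symm
      _ ≤ ‖G (x + t • d) - G x‖ * ‖d‖ := real_inner_le_norm _ _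
      _ ≤ L * (t * ‖d‖) * ‖d‖ := by gcongr
      _ = L * t * ‖d‖ ^ 2 := by ring
  have hanti : AntitoneOn k (Icc 0 1) :=
    antitoneOn_of_hasDerivWithinAt_nonpos (convex_Icc 0 1)
      (fun t ht => (hk t ht).continuousAt.continuousWithinAt)
      (fun t ht => (hk t (interior_subset ht)).hasDerivWithinAt)
      (fun t ht => hk' t (interior_subset ht))
  have hk01 := hanti (left_mem_Icc.2 zero_le_one) (right_mem_Icc.2 zero_le_one) zero_le_one
  simp only [k, d, zero_smul, add_zero, one_smul, add_sub_cancel] at hk01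
  linarith

variable {F : Type*} [NormedAddCommGroup F] [InnerProductSpace ℝ F] [CompleteSpace F]

theorem HasGradientAt.add_inner_comp {f : E → ℝ} {c : E → F} {g x : E} {J : E →L[ℝ] F}
    (hf : HasGradientAt f g x) (hc : HasFDerivAt c J x) (μ : F) :
    HasGradientAt (fun y => f y + ⟪μ, c y⟫) (g + ContinuousLinearMap.adjoint J μ) x := by
  refine (hf.hasFDerivAt.fun_add ((innerSL ℝ μ).hasFDerivAt.comp x hc)).congr_fderiv ?_
  ext v
  simp [ContinuousLinearMap.adjoint_inner_left]
end

theorem inner_le_mul_add_of_norm_le {F : Type*} [NormedAddCommGroup F] [InnerProductSpace ℝ F]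
    {u v w : F} {a b r : ℝ} (hu : ‖u‖ ≤ a) (hw : ‖w‖ ≤ b) (hvw : ‖v - w‖ ≤ r) :
    ⟪u, v⟫ ≤ a * (b + r) :=
  calc ⟪u, v⟫ ≤ ‖u‖ * ‖v‖ := real_inner_le_norm u v
    _ ≤ a * (b + r) := mul_le_mul hu ((norm_le_norm_add_norm_sub' v w).trans (add_le_add hw hvw))
        (norm_nonneg v) ((norm_nonneg u).trans hu)

theorem convex_setOf_forall_nonneg (ι : Type*) :
    Convex ℝ {x : EuclideanSpace ℝ ι | ∀ i, 0 ≤ x i} := by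
  intro x hx y hy a b ha hb _ i
  simp only [PiLp.add_apply, PiLp.smul_apply, smul_eq_mul]
  exact add_nonneg (mul_nonneg ha (hx i)) (mul_nonneg hb (hy i))

theorem sub_le_neg_mul_of_half_sq_le {a b κ ξ ω : ℝ} (ha : 0 ≤ a) (hξ : 0 < ξ)
    (hκ : 0 ≤ κ) (hω : ξ * a ≤ ω) (h : 1 / 2 * b ^ 2 ≤ 1 / 2 * a ^ 2 - κ * ω ^ 2) :
    b - a ≤ -(κ * ξ * ω) := by
  have hba : b ≤ a := by nlinarith
  have hsum : ξ * (a + b) ≤ 2 * ω := by nlinarith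
  have hgap : 2 * κ * ξ * ω ^ 2 ≤ (a - b) * (2 * ω) :=
    calc 2 * κ * ξ * ω ^ 2 ≤ ξ * (a ^ 2 - b ^ 2) := by nlinarith
      _ = (a - b) * (ξ * (a + b)) := by ring
      _ ≤ (a - b) * (2 * ω) := by gcongr
  rcases ((mul_nonneg hξ.le ha).trans hω).eq_or_lt with rfl | hω0
  · simpa using hba
  · nlinarith

theorem quadratic_increase_le_mul {κg κc Llam Lc LL θ ω κω a : ℝ} (hκg : 0 ≤ κg) (hκc : 0 ≤ κc)
    (hLlam : 0 ≤ Llam) (hLc : 0 ≤ Lc) (hLL : 0 ≤ LL) (ha : 0 ≤ a) (haθ : a ≤ θ * ω)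
    (hω : 0 ≤ ω) (hωκ : ω ≤ κω) :
    κg * a + LL / 2 * a ^ 2 + Llam * a * (κc + Lc * a) ≤
      ((κg + κc * Llam) * θ + (LL / 2 + Llam * Lc) * θ ^ 2 * κω) * ω := by
  have ha2 : a ^ 2 ≤ θ ^ 2 * κω * ω := by
    calc a ^ 2 ≤ (θ * ω) ^ 2 := pow_le_pow_left₀ ha haθ 2
      _ = θ ^ 2 * ω * ω := by ring
      _ ≤ θ ^ 2 * κω * ω := by gcongr
  calc κg * a + LL / 2 * a ^ 2 + Llam * a * (κc + Lc * a)
      = (κg + κc * Llam) * a + (LL / 2 + Llam * Lc) * a ^ 2 := by ring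
    _ ≤ (κg + κc * Llam) * (θ * ω) + (LL / 2 + Llam * Lc) * (θ ^ 2 * κω * ω) := by gcongr
    _ = _ := by ring

theorem stmt9_general {n m : ℕ}
    (f : EuclideanSpace ℝ (Fin n) → ℝ)
    (c : EuclideanSpace ℝ (Fin n) → EuclideanSpace ℝ (Fin m))
    (g : EuclideanSpace ℝ (Fin n) → EuclideanSpace ℝ (Fin n))
    (J : EuclideanSpace ℝ (Fin n) → (EuclideanSpace ℝ (Fin n) →L[ℝ] EuclideanSpace ℝ (Fin m)))
    -- `O` is the nonnegative orthant
    (O : Set (EuclideanSpace ℝ (Fin n))) (hO : O = {x | ∀ i, 0 ≤ x i})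
    -- `f` and `c` are continuously differentiable on an open set `U ⊇ O`,
    -- with gradient `g x` and derivative `J x`
    (U : Set (EuclideanSpace ℝ (Fin n))) (hOU : O ⊆ U)
    (hf : ∀ x ∈ U, HasGradientAt f (g x) x)
    (hcder : ∀ x ∈ U, HasFDerivAt c (J x) x)
    -- least-squares multiplier
    (lamhat : EuclideanSpace ℝ (Fin n) → EuclideanSpace ℝ (Fin m))
    (κg κc κlam Lc Llam LL : ℝ)
    (hκg : 0 < κg) (hκc : 0 < κc)
    (hLc : 0 < Lc) (hLlam : 0 < Llam) (hLL : 0 < LL)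
    (hcb : ∀ x ∈ O, ‖c x‖ ≤ κc)
    (hcL : ∀ x ∈ O, ∀ y ∈ O, ‖c x - c y‖ ≤ Lc * ‖x - y‖)
    (hlb : ∀ x ∈ O, ‖lamhat x‖ ≤ κlam)
    (hlL : ∀ x ∈ O, ∀ y ∈ O, ‖lamhat x - lamhat y‖ ≤ Llam * ‖x - y‖)
    (hLLip : ∀ lam : EuclideanSpace ℝ (Fin m), ‖lam‖ ≤ κlam →
      ∀ x ∈ O, ∀ y ∈ O,
        ‖(g x + (ContinuousLinearMap.adjoint (J x)) lam)
          - (g y + (ContinuousLinearMap.adjoint (J y)) lam)‖ ≤ LL * ‖x - y‖)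
    (hgradL : ∀ x ∈ O, ‖g x + (ContinuousLinearMap.adjoint (J x)) (lamhat x)‖ ≤ κg)
    (θN κn ξ κω η ρ : ℝ)
    (hθN : 1 ≤ θN) (hκn1 : 0 < κn)
    (hξ1 : 0 < ξ) (hκω : 0 < κω) (hη : 0 < η)
    (hρ : ρ = (1 / (κn * ξ)) *
      ((κg + κc * Llam) * θN + (LL / 2 + Llam * Lc) * θN ^ 2 * κω + η))
    (x : EuclideanSpace ℝ (Fin n)) (hx : x ∈ O)
    (ω : ℝ) (hω1 : ξ * ‖c x‖ ≤ ω) (hω2 : ω ≤ κω)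
    (s : EuclideanSpace ℝ (Fin n)) (hxs : x + s ∈ O)
    (hsb : ‖s‖ ≤ θN * ω)
    (hdec : (1/2) * ‖c (x + s)‖ ^ 2 ≤ (1/2) * ‖c x‖ ^ 2 - κn * ω ^ 2) :
    (f (x + s) + ⟪lamhat (x + s), c (x + s)⟫ + ρ * ‖c (x + s)‖)
      - (f x + ⟪lamhat x, c x⟫ + ρ * ‖c x‖) ≤ -(η * ω) := by
  have hω : 0 ≤ ω := (mul_nonneg hξ1.le (norm_nonneg _)).trans hω1
  have hK : Convex ℝ O := hO ▸ convex_setOf_forall_nonneg (Fin n)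
  have hLag : f (x + s) + ⟪lamhat x, c (x + s)⟫ ≤
      f x + ⟪lamhat x, c x⟫ + κg * ‖s‖ + LL / 2 * ‖s‖ ^ 2 := by
    have hdescent := hK.le_add_inner_add_half_mul_sq
      (fun z hz => (hf z (hOU hz)).add_inner_comp (hcder z (hOU hz)) (lamhat x))
      (fun z hz => hLLip _ (hlb x hx) z hz x hx) hx hxs
    have hslope := (real_inner_le_norm _ s).trans
      (mul_le_mul_of_nonneg_right (hgradL x hx) (norm_nonneg s))
    rw [add_sub_cancel_left] at hdescent
    linarith
  have hmult : ⟪lamhat (x + s) - lamhat x, c (x + s)⟫ ≤ Llam * ‖s‖ * (κc + Lc * ‖s‖) :=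
    inner_le_mul_add_of_norm_le (by simpa using hlL _ hxs x hx) (hcb x hx)
      (by simpa using hcL _ hxs x hx)
  have hpen : ‖c (x + s)‖ - ‖c x‖ ≤ -(κn * ξ * ω) :=
    sub_le_neg_mul_of_half_sq_le (norm_nonneg _) hξ1 hκn1.le hω1 hdec
  have hquad := quadratic_increase_le_mul hκg.le hκc.le hLlam.le hLc.le hLL.le
    (norm_nonneg s) hsb hω hω2
  have hρ0 : 0 ≤ ρ := by rw [hρ]; positivity
  have hρκ : ρ * (κn * ξ * ω) =
      ((κg + κc * Llam) * θN + (LL / 2 + Llam * Lc) * θN ^ 2 * κω + η) * ω := by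
    rw [hρ]; field_simp
  rw [← sub_add_cancel (lamhat (x + s)) (lamhat x), inner_add_left]
  linarith [mul_le_mul_of_nonneg_left hpen hρ0]

theorem stmt9 {n m : ℕ}
    (f : EuclideanSpace ℝ (Fin n) → ℝ)
    (c : EuclideanSpace ℝ (Fin n) → EuclideanSpace ℝ (Fin m))
    (g : EuclideanSpace ℝ (Fin n) → EuclideanSpace ℝ (Fin n))
    (J : EuclideanSpace ℝ (Fin n) → (EuclideanSpace ℝ (Fin n) →L[ℝ] EuclideanSpace ℝ (Fin m)))
    -- `O` is the nonnegative orthant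
    (O : Set (EuclideanSpace ℝ (Fin n))) (hO : O = {x | ∀ i, 0 ≤ x i})
    -- `f` and `c` are continuously differentiable on an open set `U ⊇ O`,
    -- with gradient `g x` and derivative `J x`
    (U : Set (EuclideanSpace ℝ (Fin n))) (hU : IsOpen U) (hOU : O ⊆ U)
    (hf : ∀ x ∈ U, HasGradientAt f (g x) x) (hgcont : ContinuousOn g U)
    (hcder : ∀ x ∈ U, HasFDerivAt c (J x) x) (hJcont : ContinuousOn J U)
    -- least-squares multiplier
    (lamhat : EuclideanSpace ℝ (Fin n) → EuclideanSpace ℝ (Fin m))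
    (hlam : ∀ x ∈ O,
      (J x) ((ContinuousLinearMap.adjoint (J x)) (lamhat x)) = -((J x) (g x)))
    (κg κc κlam Lc Llam LL : ℝ)
    (hκg : 0 < κg) (hκc : 0 < κc) (hκlam : 0 < κlam)
    (hLc : 0 < Lc) (hLlam : 0 < Llam) (hLL : 0 < LL)
    (hgb : ∀ x ∈ O, ‖g x‖ ≤ κg)
    (hcb : ∀ x ∈ O, ‖c x‖ ≤ κc)
    (hcL : ∀ x ∈ O, ∀ y ∈ O, ‖c x - c y‖ ≤ Lc * ‖x - y‖)
    (hlb : ∀ x ∈ O, ‖lamhat x‖ ≤ κlam)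
    (hlL : ∀ x ∈ O, ∀ y ∈ O, ‖lamhat x - lamhat y‖ ≤ Llam * ‖x - y‖)
    (hLLip : ∀ lam : EuclideanSpace ℝ (Fin m), ‖lam‖ ≤ κlam →
      ∀ x ∈ O, ∀ y ∈ O,
        ‖(g x + (ContinuousLinearMap.adjoint (J x)) lam)
          - (g y + (ContinuousLinearMap.adjoint (J y)) lam)‖ ≤ LL * ‖x - y‖)
    (hgradL : ∀ x ∈ O, ‖g x + (ContinuousLinearMap.adjoint (J x)) (lamhat x)‖ ≤ κg)
    (θN κn ξ κω η ρ : ℝ)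
    (hθN : 1 ≤ θN) (hκn1 : 0 < κn) (hκn2 : κn < 1/2)
    (hξ1 : 0 < ξ) (hξ2 : ξ ≤ 1) (hκω : 0 < κω) (hη : 0 < η)
    (hρ : ρ = (1 / (κn * ξ)) *
      ((κg + κc * Llam) * θN + (LL / 2 + Llam * Lc) * θN ^ 2 * κω + η))
    (x : EuclideanSpace ℝ (Fin n)) (hx : x ∈ O)
    (ω : ℝ) (hω1 : ξ * ‖c x‖ ≤ ω) (hω2 : ω ≤ κω)
    (s : EuclideanSpace ℝ (Fin n)) (hxs : x + s ∈ O)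
    (hsb : ‖s‖ ≤ θN * ω)
    (hdec : (1/2) * ‖c (x + s)‖ ^ 2 ≤ (1/2) * ‖c x‖ ^ 2 - κn * ω ^ 2) :
    (f (x + s) + ⟪lamhat (x + s), c (x + s)⟫ + ρ * ‖c (x + s)‖)
      - (f x + ⟪lamhat x, c x⟫ + ρ * ‖c x‖) ≤ -(η * ω) :=
  stmt9_general f c g J O hO U hOU hf hcder lamhat κg κc κlam Lc Llam LL hκg hκc hLc hLlam hLL hcb
    hcL hlb hlL hLLip hgradL θN κn ξ κω η ρ hθN hκn1 hξ1 hκω hη hρ x hx ω hω1 hω2 s hxs hsb hdec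
end

section
/- For every m ∈ ℕ, the sum from τ = 0 to m of α(τ)·ω(τ)² is at least η·√ς·(√(1 + Γ(m+1)/ς) − 1). -/
/-!
With `S τ = ς + Γ τ`, the term `α τ * ω τ ^ 2 = η (S (τ+1) - S τ) / √(S (τ+1))` dominates
`η (√(S (τ+1)) - √(S τ))`, because `y - x = (√y - √x)(√y + √x) ≥ (√y - √x) √y`. Summing, the
right-hand side telescopes to `η (√(ς + Γ (m+1)) - √ς)`, which is the claimed bound.
-/

open Finset

namespace Real

theorem sqrt_sub_sqrt_le_sub_div_sqrt {x y : ℝ} (hx : 0 ≤ x) (hxy : x ≤ y) :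
    √y - √x ≤ (y - x) / √y := by
  rcases (hx.trans hxy).eq_or_lt with rfl | hy
  · simp [le_antisymm hxy hx]
  rw [le_div_iff₀ (sqrt_pos.2 hy)]
  nlinarith [sq_sqrt hx, sq_sqrt hy.le,
    mul_le_mul_of_nonneg_left (sqrt_le_sqrt hxy) (sqrt_nonneg x)]

theorem sqrt_add_sub_sqrt_le_sum_div_sqrt {c : ℝ} (hc : 0 ≤ c) (ω : ℕ → ℝ) (n : ℕ) :
    √(c + ∑ i ∈ range n, ω i ^ 2) - √c
      ≤ ∑ τ ∈ range n, ω τ ^ 2 / √(c + ∑ i ∈ range (τ + 1), ω i ^ 2) := by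
  have hpartial : ∀ τ, 0 ≤ c + ∑ i ∈ range τ, ω i ^ 2 := fun τ => by positivity
  calc √(c + ∑ i ∈ range n, ω i ^ 2) - √c
      = ∑ τ ∈ range n,
          (√(c + ∑ i ∈ range (τ + 1), ω i ^ 2) - √(c + ∑ i ∈ range τ, ω i ^ 2)) := by
        rw [sum_range_sub (fun τ => √(c + ∑ i ∈ range τ, ω i ^ 2))]
        simp
    _ ≤ _ := by
        refine sum_le_sum fun τ _ => ?_
        rw [sum_range_succ, ← add_assoc]
        have h := sqrt_sub_sqrt_le_sub_div_sqrt (hpartial τ)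
          (le_add_of_nonneg_right (sq_nonneg (ω τ)))
        rwa [add_sub_cancel_left] at h

theorem sqrt_mul_sqrt_one_add_div {c : ℝ} (hc : 0 < c) (x : ℝ) :
    √c * √(1 + x / c) = √(c + x) := by
  rw [← sqrt_mul hc.le]
  congr 1
  field_simp

end Real

theorem stmt11
    (η ς : ℝ) (hη : 0 < η) (hς : 0 < ς)
    (ω Γ α : ℕ → ℝ)
    (hΓ0 : Γ 0 = 0)
    (hΓ : ∀ τ, Γ (τ + 1) = Γ τ + ω τ ^ 2)
    (hα : ∀ τ, α τ = η / Real.sqrt (ς + Γ (τ + 1))) :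
    ∀ m : ℕ,
      η * Real.sqrt ς * (Real.sqrt (1 + Γ (m + 1) / ς) - 1)
        ≤ ∑ τ ∈ Finset.range (m + 1), α τ * ω τ ^ 2 := by
  have hΓsum : Γ = fun τ => ∑ i ∈ range τ, ω i ^ 2 := by
    funext τ
    induction τ with
    | zero => simp [hΓ0]
    | succ τ ih => rw [hΓ, ih, sum_range_succ]
  intro m
  calc η * √ς * (√(1 + Γ (m + 1) / ς) - 1)
      = η * (√(ς + Γ (m + 1)) - √ς) := by
        rw [← Real.sqrt_mul_sqrt_one_add_div hς]; ring
    _ ≤ η * ∑ τ ∈ range (m + 1), ω τ ^ 2 / √(ς + Γ (τ + 1)) := by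
        subst hΓsum
        exact mul_le_mul_of_nonneg_left
          (Real.sqrt_add_sub_sqrt_le_sum_div_sqrt hς.le ω (m + 1)) hη.le
    _ = ∑ τ ∈ range (m + 1), α τ * ω τ ^ 2 := by
        rw [mul_sum]
        refine sum_congr rfl fun τ _ => ?_
        rw [hα]; ring
end

section
/- For every m ∈ ℕ, the sum from τ = 0 to m of α(τ)²·ω(τ)² is at most η²·log(1 + Γ(m+1)/ς). -/
/-! With `S τ = ς + Γ τ`, each summand is `η² (S (τ+1) - S τ) / S (τ+1)`, and
`1 - a / b ≤ log (b / a)` bounds it by `η² (log S (τ+1) - log S τ)`; the sum then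
telescopes to `η² log (S (m+1) / S 0) = η² log (1 + Γ (m+1) / ς)`. -/

open Finset Real

lemma sub_div_le_log_sub_log {a b : ℝ} (ha : 0 < a) (hb : 0 < b) :
    (b - a) / b ≤ log b - log a := by
  have h := one_sub_inv_le_log_of_pos (div_pos hb ha)
  rwa [inv_div, log_div hb.ne' ha.ne', one_sub_div hb.ne'] at h

lemma sum_sub_div_le_log_sub_log {S : ℕ → ℝ} (hS : ∀ n, 0 < S n) (n : ℕ) :
    ∑ i ∈ range n, (S (i + 1) - S i) / S (i + 1) ≤ log (S n) - log (S 0) := by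
  calc ∑ i ∈ range n, (S (i + 1) - S i) / S (i + 1)
      ≤ ∑ i ∈ range n, (log (S (i + 1)) - log (S i)) :=
        sum_le_sum fun i _ => sub_div_le_log_sub_log (hS i) (hS (i + 1))
    _ = log (S n) - log (S 0) := sum_range_sub (fun i => log (S i)) n

theorem stmt12_general
    (η ς : ℝ) (hς : 0 < ς)
    (ω Γ α : ℕ → ℝ)
    (hΓ0 : Γ 0 = 0)
    (hΓ : ∀ τ, Γ (τ + 1) = Γ τ + ω τ ^ 2)
    (hα : ∀ τ, α τ = η / Real.sqrt (ς + Γ (τ + 1))) :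
    ∀ m : ℕ,
      ∑ τ ∈ Finset.range (m + 1), α τ ^ 2 * ω τ ^ 2
        ≤ η ^ 2 * Real.log (1 + Γ (m + 1) / ς) := by
  intro m
  have hΓ_nonneg : ∀ τ, 0 ≤ Γ τ := by
    intro τ
    induction τ with
    | zero => exact hΓ0.ge
    | succ τ ih => rw [hΓ]; positivity
  have hS : ∀ τ, 0 < ς + Γ τ := fun τ => add_pos_of_pos_of_nonneg hς (hΓ_nonneg τ)
  have hsummand : ∀ τ, α τ ^ 2 * ω τ ^ 2
      = η ^ 2 * (((ς + Γ (τ + 1)) - (ς + Γ τ)) / (ς + Γ (τ + 1))) := by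
    intro τ
    rw [hα, div_pow, sq_sqrt (hS (τ + 1)).le, hΓ]
    ring
  have hlog : log (1 + Γ (m + 1) / ς) = log (ς + Γ (m + 1)) - log (ς + Γ 0) := by
    rw [hΓ0, add_zero, ← log_div (hS (m + 1)).ne' hς.ne', add_div, div_self hς.ne']
  simp only [hsummand, ← mul_sum, hlog]
  exact mul_le_mul_of_nonneg_left (sum_sub_div_le_log_sub_log hS (m + 1)) (sq_nonneg η)

theorem stmt12
    (η ς : ℝ) (hη : 0 < η) (hς : 0 < ς)
    (ω Γ α : ℕ → ℝ)
    (hΓ0 : Γ 0 = 0)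
    (hΓ : ∀ τ, Γ (τ + 1) = Γ τ + ω τ ^ 2)
    (hα : ∀ τ, α τ = η / Real.sqrt (ς + Γ (τ + 1))) :
    ∀ m : ℕ,
      ∑ τ ∈ Finset.range (m + 1), α τ ^ 2 * ω τ ^ 2
        ≤ η ^ 2 * Real.log (1 + Γ (m + 1) / ς) :=
  stmt12_general η ς hς ω Γ α hΓ0 hΓ hα
end

section
/- For every k ∈ ℕ: √(ς + Γ(k+1)) ≤ κ_T, where κ_T = 2·κ_gap·√ς + (4κ_tan/κ_t)·[log(4κ_tan/(κ_t·√ς)) − 1]. -/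
/-!
With `s k = √(ς + Γ k)`, the quantity `κt η s + ψ - 2 κtan η² log s` is nonincreasing in `k`.
On a tangential step `α = η / s (k+1)` and `s (k+1)² - s k² = ωT²`, so the decrease
`κt α ωT²` pays for the growth `κt η (s (k+1) - s k)`, while the error
`κtan α² ωT² = κtan η² (1 - s k² / s (k+1)²)` is at most `2 κtan η² log (s (k+1) / s k)`;
normal steps only decrease `ψ`. Comparing with `k = 0` and using `ψ ≥ ψlow` leaves an inequality
`κt η s ≤ c + 2 κtan η² log (s / √ς)`, and bounding `log` by its tangent line at
`4 κtan η / (κt √ς)` absorbs the logarithm into half of the linear term.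
-/

open Real

lemma sub_le_sq_sub_sq_div {p q : ℝ} (hp : 0 ≤ p) (hpq : p ≤ q) :
    q - p ≤ (q ^ 2 - p ^ 2) / q := by
  rcases hpq.eq_or_lt with rfl | hpq
  · simp
  have hq : 0 < q := hp.trans_lt hpq
  rw [le_div_iff₀ hq]
  nlinarith

lemma sq_sub_sq_div_sq_le_two_mul_log_sub {p q : ℝ} (hp : 0 < p) (hq : 0 < q) :
    (q ^ 2 - p ^ 2) / q ^ 2 ≤ 2 * (log q - log p) := by
  have h := one_sub_inv_le_log_of_pos (div_pos (pow_pos hq 2) (pow_pos hp 2))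
  rw [inv_div, log_div (by positivity) (by positivity), log_pow, log_pow] at h
  rw [sub_div, div_self (by positivity)]
  push_cast at h
  linarith

lemma mul_log_sub_le_of_le {t T : ℝ} (ht : 0 < t) (htT : t ≤ T) :
    t * log t - t ≤ T * log T - T + 1 := by
  have hT : 0 < T := ht.trans_le htT
  have hlogT : T - 1 ≤ T * log T := by
    have := one_sub_inv_le_log_of_pos hT
    rw [← sub_nonneg] at this ⊢
    calc 0 ≤ T * (log T - (1 - T⁻¹)) := mul_nonneg hT.le this
      _ = T * log T - (T - 1) := by field_simp
  rcases le_or_gt t 1 with ht1 | ht1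
  · nlinarith [mul_nonpos_of_nonneg_of_nonpos ht.le (log_nonpos ht.le ht1)]
  · -- on `[1, ∞)` the map `t ↦ t log t - t` is increasing
    have hratio : T - t ≤ T * (log T - log t) := by
      have := one_sub_inv_le_log_of_pos (div_pos hT ht)
      rw [inv_div, log_div hT.ne' ht.ne'] at this
      calc T - t = T * (1 - t / T) := by field_simp
        _ ≤ T * (log T - log t) := mul_le_mul_of_nonneg_left this hT.le
    nlinarith [log_nonneg ht1.le, mul_nonneg (sub_nonneg.2 htT) (log_nonneg ht1.le)]

lemma mul_log_mul_sub_one_le {η M : ℝ} (hη0 : 0 < η) (hη1 : η ≤ 1) (hM : 0 < M) :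
    η * (log (η * M) - 1) ≤ log M - 1 + M⁻¹ := by
  have h := mul_log_sub_le_of_le (mul_pos hη0 hM) (mul_le_of_le_one_left hM.le hη1)
  rw [← mul_le_mul_iff_of_pos_left hM]
  calc M * (η * (log (η * M) - 1)) = η * M * log (η * M) - η * M := by ring
    _ ≤ M * log M - M + 1 := h
    _ = M * (log M - 1 + M⁻¹) := by field_simp

lemma mul_le_of_mul_sub_mul_log_le {a b c r x : ℝ} (ha : 0 < a) (hb : 0 < b) (hr : 0 < r)
    (hx : 0 < x) (h : a * x - b * log (x / r) ≤ c) :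
    a * x ≤ 2 * c + 2 * b * (log (2 * b / (a * r)) - 1) := by
  -- tangent line of `log` at `m = 2b / (ar)`
  set m := 2 * b / (a * r)
  have hm : 0 < m := by positivity
  have htangent : log (x / r) ≤ x / r / m + log m - 1 := by
    have := log_le_sub_one_of_pos (show 0 < x / r / m by positivity)
    rw [log_div (by positivity) hm.ne'] at this
    linarith
  have hslope : b * (x / r / m) = a * x / 2 := by
    simp only [m]
    field_simp
  nlinarith [mul_le_mul_of_nonneg_left htangent hb.le]

lemma le_of_lyapunov_bound {η κt κtan r P x : ℝ} (hη0 : 0 < η) (hη1 : η ≤ 1) (hκt0 : 0 < κt)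
    (hκt1 : κt ≤ 1 / 2) (hκtan : 0 < κtan) (hr0 : 0 < r) (hr1 : r ≤ 1) (hx : 0 < x)
    (h : κt * η * x - 2 * κtan * η ^ 2 * log (x / r) ≤ κt * η * r + P) :
    x ≤ 2 * (1 + P) / (η * κt) + 4 * κtan / κt * (log (4 * κtan / (κt * r)) - 1) := by
  set M := 4 * κtan / (κt * r)
  have hM : 0 < M := by positivity
  have hsolve := mul_le_of_mul_sub_mul_log_le (by positivity) (by positivity) hr0 hx h
  have hm : 2 * (2 * κtan * η ^ 2) / (κt * η * r) = η * M := by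
    simp only [M]
    field_simp
    norm_num
  rw [hm] at hsolve
  have hη := mul_log_mul_sub_one_le hη0 hη1 hM
  have hMinv : 4 * κtan * η * M⁻¹ = κt * η * r := by
    simp only [M]
    field_simp
  have hbound : κt * η * x ≤ 3 * (κt * η * r) + 2 * P + 4 * κtan * η * (log M - 1) := by
    nlinarith [mul_le_mul_of_nonneg_left hη (show 0 ≤ 4 * κtan * η by positivity)]
  have hslack : 3 * (κt * η * r) ≤ 2 := by nlinarith [mul_pos hκt0 hη0]
  rw [← mul_le_mul_iff_of_pos_left (mul_pos hκt0 hη0)]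
  calc κt * η * x ≤ 2 + 2 * P + 4 * κtan * η * (log M - 1) := by linarith
    _ = κt * η * (2 * (1 + P) / (η * κt) + 4 * κtan / κt * (log M - 1)) := by
      field_simp

lemma lyapunov_step_le {η κt κtan p q ω ψ ψ' : ℝ} (hη : 0 ≤ η) (hκt : 0 ≤ κt) (hκtan : 0 ≤ κtan)
    (hp : 0 < p) (hq : 0 < q) (hpq : q ^ 2 = p ^ 2 + ω ^ 2)
    (h : ψ' ≤ ψ - κt * (η / q) * ω ^ 2 + κtan * (η / q) ^ 2 * ω ^ 2) :
    κt * η * q + ψ' - 2 * κtan * η ^ 2 * log q ≤ κt * η * p + ψ - 2 * κtan * η ^ 2 * log p := by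
  have hω : ω ^ 2 = q ^ 2 - p ^ 2 := by linarith
  have hdescent : κt * η * (q - p) ≤ κt * (η / q) * ω ^ 2 := by
    have := sub_le_sq_sub_sq_div hp.le (by nlinarith [sq_nonneg ω] : p ≤ q)
    calc κt * η * (q - p) ≤ κt * η * ((q ^ 2 - p ^ 2) / q) := by gcongr
      _ = κt * (η / q) * ω ^ 2 := by rw [hω]; ring
  have hcurvature : κtan * (η / q) ^ 2 * ω ^ 2 ≤ 2 * κtan * η ^ 2 * (log q - log p) := by
    have := sq_sub_sq_div_sq_le_two_mul_log_sub hp hq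
    calc κtan * (η / q) ^ 2 * ω ^ 2 = κtan * η ^ 2 * ((q ^ 2 - p ^ 2) / q ^ 2) := by
          rw [hω]; ring
      _ ≤ κtan * η ^ 2 * (2 * (log q - log p)) := by gcongr
      _ = 2 * κtan * η ^ 2 * (log q - log p) := by ring
  linarith

lemma monotone_of_add_sq {T : Set ℕ} {ω Γ : ℕ → ℝ} (hΓT : ∀ k ∈ T, Γ (k + 1) = Γ k + ω k ^ 2)
    (hΓN : ∀ k, k ∉ T → Γ (k + 1) = Γ k) : Monotone Γ := by
  refine monotone_nat_of_le_succ fun k ↦ ?_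
  by_cases hk : k ∈ T
  · rw [hΓT k hk]
    exact le_add_of_nonneg_right (sq_nonneg _)
  · rw [hΓN k hk]

lemma lyapunov_antitone {η ς κt κtan : ℝ} (hη : 0 ≤ η) (hς : 0 < ς) (hκt : 0 ≤ κt)
    (hκtan : 0 ≤ κtan) {T : Set ℕ} {ωT Γ α ψ : ℕ → ℝ} (hΓ : ∀ k, 0 ≤ Γ k)
    (hΓT : ∀ k ∈ T, Γ (k + 1) = Γ k + ωT k ^ 2) (hΓN : ∀ k, k ∉ T → Γ (k + 1) = Γ k)
    (hα : ∀ k, α k = η / √(Γ k + ωT k ^ 2 + ς))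
    (hψT : ∀ k ∈ T, ψ (k + 1) ≤ ψ k - κt * α k * ωT k ^ 2 + κtan * α k ^ 2 * ωT k ^ 2)
    (hψN : ∀ k, k ∉ T → ψ (k + 1) ≤ ψ k) :
    Antitone fun k ↦
      κt * η * √(ς + Γ k) + ψ k - 2 * κtan * η ^ 2 * log √(ς + Γ k) := by
  have hs : ∀ k, 0 < ς + Γ k := fun k ↦ by linarith [hΓ k]
  refine antitone_nat_of_succ_le fun k ↦ ?_
  by_cases hk : k ∈ T
  · have hαk : α k = η / √(ς + Γ (k + 1)) := by rw [hα, hΓT k hk]; ring_nf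
    refine lyapunov_step_le (ω := ωT k) hη hκt hκtan (sqrt_pos.2 (hs k))
      (sqrt_pos.2 (hs (k + 1))) ?_ (hαk ▸ hψT k hk)
    rw [sq_sqrt (hs k).le, sq_sqrt (hs (k + 1)).le, hΓT k hk]
    ring
  · simp only [hΓN k hk]
    linarith [hψN k hk]

theorem stmt15_general
    (η ς κt κtan : ℝ)
    (hη1 : 0 < η) (hη2 : η ≤ 1) (hς1 : 0 < ς) (hς2 : ς ≤ 1/2)
    (hκt1 : 0 < κt) (hκt2 : κt ≤ 1/2) (hκtan : 0 < κtan)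
    (ωT ωN : ℕ → ℝ) (hωN : ∀ k, 0 ≤ ωN k)
    (T N : Set ℕ)
    (Γ α : ℕ → ℝ)
    (hΓ0 : Γ 0 = 0)
    (hΓT : ∀ k ∈ T, Γ (k + 1) = Γ k + ωT k ^ 2)
    (hΓN : ∀ k, k ∉ T → Γ (k + 1) = Γ k)
    (hα : ∀ k, α k = η / Real.sqrt (Γ k + ωT k ^ 2 + ς))
    (ψ ψp : ℕ → ℝ)
    (hψN : ∀ k ∈ N, ψp k - ψ k ≤ -(η * ωN k))
    (hψN' : ∀ k, k ∉ N → ψp k = ψ k)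
    (hψT : ∀ k ∈ T, ψ (k + 1) - ψp k ≤ -(κt * α k * ωT k ^ 2) + κtan * α k ^ 2 * ωT k ^ 2)
    (hψT' : ∀ k, k ∉ T → ψ (k + 1) = ψp k)
    (ψlow : ℝ) (hlow : ∀ k, ψlow ≤ ψ k)
    (κgap : ℝ) (hκgap : κgap = (1 + ψ 0 - ψlow) / (η * κt * Real.sqrt ς))
    (κT : ℝ)
    (hκT : κT = 2 * κgap * Real.sqrt ς
      + (4 * κtan / κt) * (Real.log (4 * κtan / (κt * Real.sqrt ς)) - 1)) :
    ∀ k : ℕ, Real.sqrt (ς + Γ (k + 1)) ≤ κT := by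
  intro k
  have hΓ : ∀ k, 0 ≤ Γ k := fun k ↦ hΓ0 ▸ monotone_of_add_sq hΓT hΓN (Nat.zero_le k)
  have hψp : ∀ k, ψp k ≤ ψ k := fun k ↦ by
    by_cases hk : k ∈ N
    · linarith [hψN k hk, mul_nonneg hη1.le (hωN k)]
    · exact (hψN' k hk).le
  have hV := lyapunov_antitone hη1.le hς1 hκt1.le hκtan.le hΓ hΓT hΓN hα
    (fun k hk ↦ by linarith [hψT k hk, hψp k]) (fun k hk ↦ (hψT' k hk).trans_le (hψp k))
    (Nat.zero_le (k + 1))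
  have hs : 0 < √(ς + Γ (k + 1)) := sqrt_pos.2 (by linarith [hΓ (k + 1)])
  have hsς : 0 < √ς := sqrt_pos.2 hς1
  simp only [hΓ0, add_zero] at hV
  have hgap : 2 * κgap * √ς = 2 * (1 + (ψ 0 - ψlow)) / (η * κt) := by
    rw [hκgap]
    field_simp
    ring
  rw [hκT, hgap]
  refine le_of_lyapunov_bound hη1 hη2 hκt1 hκt2 hκtan hsς
    (sqrt_le_one.2 (by linarith)) hs ?_
  rw [log_div hs.ne' hsς.ne']
  linarith [hlow (k + 1)]

theorem stmt15
    (η ς β κt κtan ξ : ℝ)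
    (hη1 : 0 < η) (hη2 : η ≤ 1) (hς1 : 0 < ς) (hς2 : ς ≤ 1/2) (hβ : 0 < β)
    (hκt1 : 0 < κt) (hκt2 : κt ≤ 1/2) (hκtan : 0 < κtan)
    (hξ1 : 0 < ξ) (hξ2 : ξ ≤ 1)
    (hκtς : κt * Real.sqrt ς ≤ 1)
    (ωT ωN : ℕ → ℝ) (hωT : ∀ k, 0 ≤ ωT k) (hωN : ∀ k, 0 ≤ ωN k)
    (T N : Set ℕ) [DecidablePred (· ∈ T)] [DecidablePred (· ∈ N)]
    (Γ α : ℕ → ℝ)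
    (hΓ0 : Γ 0 = 0)
    (hΓT : ∀ k ∈ T, Γ (k + 1) = Γ k + ωT k ^ 2)
    (hΓN : ∀ k, k ∉ T → Γ (k + 1) = Γ k)
    (hα : ∀ k, α k = η / Real.sqrt (Γ k + ωT k ^ 2 + ς))
    (hswitch : ∀ k, k ∈ T ↔ ωN k ≤ β * α k * ωT k)
    (hTN : ∀ k, k ∉ T → k ∈ N)
    (ψ ψp : ℕ → ℝ)
    (hψN : ∀ k ∈ N, ψp k - ψ k ≤ -(η * ωN k))
    (hψN' : ∀ k, k ∉ N → ψp k = ψ k)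
    (hψT : ∀ k ∈ T, ψ (k + 1) - ψp k ≤ -(κt * α k * ωT k ^ 2) + κtan * α k ^ 2 * ωT k ^ 2)
    (hψT' : ∀ k, k ∉ T → ψ (k + 1) = ψp k)
    (ψlow : ℝ) (hlow : ∀ k, ψlow ≤ ψ k)
    (κgap : ℝ) (hκgap : κgap = (1 + ψ 0 - ψlow) / (η * κt * Real.sqrt ς))
    (κT : ℝ)
    (hκT : κT = 2 * κgap * Real.sqrt ς
      + (4 * κtan / κt) * (Real.log (4 * κtan / (κt * Real.sqrt ς)) - 1)) :
    ∀ k : ℕ, Real.sqrt (ς + Γ (k + 1)) ≤ κT :=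
  stmt15_general η ς κt κtan hη1 hη2 hς1 hς2 hκt1 hκt2 hκtan ωT ωN hωN T N Γ α hΓ0 hΓT hΓN hα ψ ψp
    hψN hψN' hψT hψT' ψlow hlow κgap hκgap κT hκT
end

section
/- Suppose in addition there is a sequence c̄ : ℕ → ℝ with 0 ≤ c̄(k) and ω_N(k) ≥ ξ·c̄(k) for all k. Then for every k ∈ ℕ: ξ·Σ_{τ ≤ k, τ ∈ T}(ω_T(τ) + c̄(τ)) ≤ Σ_{τ ≤ k, τ ∈ T}(ω_T(τ) + ω_N(τ)) ≤ κ_T·√(card{τ ∈ T : τ ≤ k})·(1 + β·η/√ς), where κ_T = 2·κ_gap·√ς + (4κ_tan/κ_t)·[log(4κ_tan/(κ_t·√ς)) − 1]. -/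
/-!
On tangential iterations the AdaGrad-norm stepsize `α = η / √(Γ + ω_T² + ς)` gives
`∑ α ω_T² ≥ η (√(Γ + ς) - √ς)` and `∑ α² ω_T² ≤ η² log ((Γ + ς) / ς)`, by comparing each term
with an increment of `√` resp. `log`. Telescoping the decrease of the merit function, which is
bounded below, then yields `c y ≤ A + B log y` for `y = √((Γ + ς) / ς)`, and such an inequality
forces `c y ≤ 2A + 2B (log (2B / c) - 1)`; this is `√(Γ + ς) ≤ κ_T`. On `T` the switching
condition gives `ω_N ≤ β (η / √ς) ω_T`, and Cauchy–Schwarz gives `∑ ω_T ≤ √|T ∩ [0, k]| √Γ(k+1)`.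
-/

open Finset Real

section Telescoping

variable {T : Set ℕ} [DecidablePred (· ∈ T)] {f g : ℕ → ℝ}

theorem sub_le_sum_filter_of_step_le (hT : ∀ k ∈ T, f (k + 1) - f k ≤ g k)
    (hnT : ∀ k, k ∉ T → f (k + 1) ≤ f k) (n : ℕ) :
    f n - f 0 ≤ ∑ k ∈ (range n).filter (· ∈ T), g k := by
  rw [← sum_range_sub, sum_filter]
  refine sum_le_sum fun k _ => ?_
  split_ifs with hk
  · exact hT k hk
  · linarith [hnT k hk]

theorem sum_filter_le_sub_of_le_step (hT : ∀ k ∈ T, g k ≤ f (k + 1) - f k)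
    (hnT : ∀ k, k ∉ T → f k ≤ f (k + 1)) (n : ℕ) :
    ∑ k ∈ (range n).filter (· ∈ T), g k ≤ f n - f 0 := by
  rw [← sum_range_sub, sum_filter]
  refine sum_le_sum fun k _ => ?_
  split_ifs with hk
  · exact hT k hk
  · linarith [hnT k hk]

theorem eq_add_sum_filter_of_step_eq (hT : ∀ k ∈ T, f (k + 1) = f k + g k)
    (hnT : ∀ k, k ∉ T → f (k + 1) = f k) (n : ℕ) :
    f n = f 0 + ∑ k ∈ (range n).filter (· ∈ T), g k := by
  rw [← sub_eq_iff_eq_add', ← sum_range_sub, sum_filter]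
  refine sum_congr rfl fun k _ => ?_
  split_ifs with hk
  · rw [hT k hk, add_sub_cancel_left]
  · rw [hnT k hk, sub_self]

end Telescoping

theorem Real.sqrt_add_sub_sqrt_le_div {a x : ℝ} (ha : 0 < a) (hx : 0 ≤ x) :
    √(a + x) - √a ≤ x / √(a + x) := by
  have hax : 0 < a + x := by linarith
  rw [le_div_iff₀ (sqrt_pos.2 hax)]
  nlinarith [sq_sqrt ha.le, sq_sqrt hax.le, sqrt_le_sqrt (by linarith : a ≤ a + x),
    sqrt_nonneg a]

theorem Real.div_add_le_log_add_sub_log {a x : ℝ} (ha : 0 < a) (hx : 0 ≤ x) :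
    x / (a + x) ≤ log (a + x) - log a := by
  have hax : 0 < a + x := by linarith
  have h := one_sub_inv_le_log_of_pos (div_pos hax ha)
  rwa [log_div hax.ne' ha.ne', inv_div, one_sub_div hax.ne', add_sub_cancel_left] at h

theorem Real.mul_le_of_mul_le_add_mul_log {c A B y : ℝ} (hc : 0 < c) (hB : 0 < B) (hy : 0 < y)
    (h : c * y ≤ A + B * log y) : c * y ≤ 2 * A + 2 * B * (log (2 * B / c) - 1) := by
  -- the tangent line of `log` at `2B / c`
  have hlog : log y ≤ c * y / (2 * B) - 1 + log (2 * B / c) := by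
    have := log_le_sub_one_of_pos (show 0 < c * y / (2 * B) by positivity)
    rw [log_div (by positivity) (by positivity), log_mul hc.ne' hy.ne'] at this
    rw [log_div (by positivity) hc.ne']
    linarith
  have : B * log y ≤ c * y / 2 - B + B * log (2 * B / c) :=
    calc B * log y ≤ B * (c * y / (2 * B) - 1 + log (2 * B / c)) := by gcongr
      _ = c * y / 2 - B + B * log (2 * B / c) := by field_simp
  linarith

theorem Finset.sum_le_sqrt_card_mul_sqrt_sum_sq {ι : Type*} (s : Finset ι) (f : ι → ℝ) :
    ∑ i ∈ s, f i ≤ √(#s : ℝ) * √(∑ i ∈ s, f i ^ 2) := by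
  simpa using Real.sum_mul_le_sqrt_mul_sqrt s (fun _ => 1) f

theorem sqrt_add_le_of_sum_bounds {η ς κt κtan D G Sα Sα2 : ℝ} (hη : 0 < η) (hη1 : η ≤ 1)
    (hς : 0 < ς) (hκt : 0 < κt) (hκtan : 0 < κtan) (hκtς : κt * √ς ≤ 1) (hG : 0 ≤ G)
    (hdesc : κt * Sα - κtan * Sα2 ≤ D)
    (hSα : η * (√(G + ς) - √ς) ≤ Sα) (hSα2 : Sα2 ≤ η ^ 2 * (log (G + ς) - log ς)) :
    √(G + ς) ≤ 2 * ((1 + D) / (η * κt * √ς)) * √ς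
      + 4 * κtan / κt * (log (4 * κtan / (κt * √ς)) - 1) := by
  set s := √ς
  set X := √(G + ς)
  have hs : 0 < s := sqrt_pos.2 hς
  have hsX : s ≤ X := sqrt_le_sqrt (by linarith)
  set y := X / s
  have hy : 1 ≤ y := (one_le_div hs).2 hsX
  have hXy : X = s * y := (mul_div_cancel₀ X hs.ne').symm
  have hlog : log (G + ς) - log ς = 2 * log y := by
    rw [log_div (by positivity) hs.ne', log_sqrt (by positivity), log_sqrt hς.le]
    ring
  have hcomb : κt * η * s * y ≤ (D + κt * η * s) + 2 * κtan * η * log y := by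
    have hlogy : η ^ 2 * log y ≤ η * log y :=
      mul_le_mul_of_nonneg_right (by nlinarith) (log_nonneg hy)
    rw [hlog] at hSα2
    have h1 := mul_le_mul_of_nonneg_left hSα hκt.le
    have h2 := mul_le_mul_of_nonneg_left hSα2 hκtan.le
    have h3 := mul_le_mul_of_nonneg_left hlogy hκtan.le
    rw [hXy] at h1
    linarith
  have hbound := mul_le_of_mul_le_add_mul_log (by positivity) (by positivity) (by positivity) hcomb
  have hM : 2 * (2 * κtan * η) / (κt * η * s) = 4 * κtan / (κt * s) := by
    field_simp; norm_num
  rw [hM] at hbound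
  -- the `1` in `1 + D` is there to absorb `κt η √ς ≤ 1`
  have hκtηs : κt * η * s ≤ 1 := by nlinarith
  refine le_of_mul_le_mul_left ?_ (by positivity : 0 < κt * η)
  calc κt * η * X = κt * η * s * y := by rw [hXy]; ring
    _ ≤ 2 * (1 + D) + 4 * κtan * η * (log (4 * κtan / (κt * s)) - 1) := by linarith
    _ = _ := by field_simp

section AdaGradNorm

variable {η ς : ℝ} {T : Set ℕ} [DecidablePred (· ∈ T)] {ω Γ α : ℕ → ℝ}

theorem accum_eq_sum_filter (hΓ0 : Γ 0 = 0) (hΓT : ∀ k ∈ T, Γ (k + 1) = Γ k + ω k ^ 2)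
    (hΓN : ∀ k, k ∉ T → Γ (k + 1) = Γ k) (n : ℕ) :
    Γ n = ∑ k ∈ (range n).filter (· ∈ T), ω k ^ 2 := by
  simpa [hΓ0] using eq_add_sum_filter_of_step_eq hΓT hΓN n

theorem stepsize_le (hη : 0 ≤ η) (hς : 0 < ς) (hΓ : ∀ k, 0 ≤ Γ k)
    (hα : ∀ k, α k = η / √(Γ k + ω k ^ 2 + ς)) (k : ℕ) : α k ≤ η / √ς := by
  rw [hα k]
  exact div_le_div_of_nonneg_left hη (sqrt_pos.2 hς)
    (sqrt_le_sqrt (by nlinarith [hΓ k, sq_nonneg (ω k)]))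

theorem sqrt_accum_sub_le_sum_stepsize_mul_sq (hη : 0 ≤ η) (hς : 0 < ς) (hΓ : ∀ k, 0 ≤ Γ k)
    (hΓT : ∀ k ∈ T, Γ (k + 1) = Γ k + ω k ^ 2) (hΓN : ∀ k, k ∉ T → Γ (k + 1) = Γ k)
    (hα : ∀ k, α k = η / √(Γ k + ω k ^ 2 + ς)) (n : ℕ) :
    η * √(Γ n + ς) - η * √(Γ 0 + ς) ≤ ∑ k ∈ (range n).filter (· ∈ T), α k * ω k ^ 2 := by
  refine sub_le_sum_filter_of_step_le (f := fun k => η * √(Γ k + ς)) (fun k hk => ?_)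
    (fun k hk => by simp only [hΓN k hk, le_refl]) n
  have hpos : 0 < Γ k + ς := by linarith [hΓ k]
  calc η * √(Γ (k + 1) + ς) - η * √(Γ k + ς)
      = η * (√(Γ k + ς + ω k ^ 2) - √(Γ k + ς)) := by rw [hΓT k hk, add_right_comm]; ring
    _ ≤ η * (ω k ^ 2 / √(Γ k + ς + ω k ^ 2)) := by
      gcongr; exact sqrt_add_sub_sqrt_le_div hpos (sq_nonneg _)
    _ = α k * ω k ^ 2 := by rw [hα k, add_right_comm]; ring

theorem sum_sq_stepsize_mul_sq_le (hς : 0 < ς) (hΓ : ∀ k, 0 ≤ Γ k)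
    (hΓT : ∀ k ∈ T, Γ (k + 1) = Γ k + ω k ^ 2) (hΓN : ∀ k, k ∉ T → Γ (k + 1) = Γ k)
    (hα : ∀ k, α k = η / √(Γ k + ω k ^ 2 + ς)) (n : ℕ) :
    ∑ k ∈ (range n).filter (· ∈ T), α k ^ 2 * ω k ^ 2
      ≤ η ^ 2 * log (Γ n + ς) - η ^ 2 * log (Γ 0 + ς) := by
  refine sum_filter_le_sub_of_le_step (f := fun k => η ^ 2 * log (Γ k + ς)) (fun k hk => ?_)
    (fun k hk => by simp only [hΓN k hk, le_refl]) n
  have hpos : 0 < Γ k + ς := by linarith [hΓ k]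
  calc α k ^ 2 * ω k ^ 2 = η ^ 2 * (ω k ^ 2 / (Γ k + ς + ω k ^ 2)) := by
        rw [hα k, div_pow, sq_sqrt (by linarith [sq_nonneg (ω k)]), add_right_comm]; ring
    _ ≤ η ^ 2 * (log (Γ k + ς + ω k ^ 2) - log (Γ k + ς)) := by
      gcongr; exact div_add_le_log_add_sub_log hpos (sq_nonneg _)
    _ = η ^ 2 * log (Γ (k + 1) + ς) - η ^ 2 * log (Γ k + ς) := by
      rw [hΓT k hk, add_right_comm]; ring

theorem sqrt_accum_add_le_of_descent {κt κtan ψlow : ℝ} {ψ : ℕ → ℝ} (hη : 0 < η) (hη1 : η ≤ 1)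
    (hς : 0 < ς) (hκt : 0 < κt) (hκtan : 0 < κtan) (hκtς : κt * √ς ≤ 1) (hΓ0 : Γ 0 = 0)
    (hΓT : ∀ k ∈ T, Γ (k + 1) = Γ k + ω k ^ 2) (hΓN : ∀ k, k ∉ T → Γ (k + 1) = Γ k)
    (hα : ∀ k, α k = η / √(Γ k + ω k ^ 2 + ς))
    (hψT : ∀ k ∈ T, ψ (k + 1) - ψ k ≤ κtan * (α k ^ 2 * ω k ^ 2) - κt * (α k * ω k ^ 2))
    (hψN : ∀ k, k ∉ T → ψ (k + 1) ≤ ψ k) (n : ℕ) (hlow : ψlow ≤ ψ n) :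
    √(Γ n + ς) ≤ 2 * ((1 + ψ 0 - ψlow) / (η * κt * √ς)) * √ς
      + 4 * κtan / κt * (log (4 * κtan / (κt * √ς)) - 1) := by
  have hΓ (k : ℕ) : 0 ≤ Γ k := by rw [accum_eq_sum_filter hΓ0 hΓT hΓN k]; positivity
  have hdesc := sub_le_sum_filter_of_step_le hψT hψN n
  rw [sum_sub_distrib, ← mul_sum, ← mul_sum] at hdesc
  have hSα := sqrt_accum_sub_le_sum_stepsize_mul_sq hη.le hς hΓ hΓT hΓN hα n
  have hSα2 := sum_sq_stepsize_mul_sq_le hς hΓ hΓT hΓN hα n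
  rw [hΓ0, zero_add, ← mul_sub] at hSα hSα2
  rw [add_sub_assoc]
  exact sqrt_add_le_of_sum_bounds hη hη1 hς hκt hκtan hκtς (hΓ n) (by linarith) hSα hSα2

end AdaGradNorm

theorem stmt16_general
    (η ς β κt κtan ξ : ℝ)
    (hη1 : 0 < η) (hη2 : η ≤ 1) (hς1 : 0 < ς) (hβ : 0 < β)
    (hκt1 : 0 < κt) (hκtan : 0 < κtan)
    (hξ2 : ξ ≤ 1)
    (hκtς : κt * Real.sqrt ς ≤ 1)
    (ωT ωN : ℕ → ℝ) (hωT : ∀ k, 0 ≤ ωT k) (hωN : ∀ k, 0 ≤ ωN k)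
    (T N : Set ℕ) [DecidablePred (· ∈ T)]
    (Γ α : ℕ → ℝ)
    (hΓ0 : Γ 0 = 0)
    (hΓT : ∀ k ∈ T, Γ (k + 1) = Γ k + ωT k ^ 2)
    (hΓN : ∀ k, k ∉ T → Γ (k + 1) = Γ k)
    (hα : ∀ k, α k = η / Real.sqrt (Γ k + ωT k ^ 2 + ς))
    (hswitch : ∀ k, k ∈ T ↔ ωN k ≤ β * α k * ωT k)
    (ψ ψp : ℕ → ℝ)
    (hψN : ∀ k ∈ N, ψp k - ψ k ≤ -(η * ωN k))
    (hψN' : ∀ k, k ∉ N → ψp k = ψ k)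
    (hψT : ∀ k ∈ T, ψ (k + 1) - ψp k ≤ -(κt * α k * ωT k ^ 2) + κtan * α k ^ 2 * ωT k ^ 2)
    (hψT' : ∀ k, k ∉ T → ψ (k + 1) = ψp k)
    (ψlow : ℝ) (hlow : ∀ k, ψlow ≤ ψ k)
    (κgap : ℝ) (hκgap : κgap = (1 + ψ 0 - ψlow) / (η * κt * Real.sqrt ς))
    (cbar : ℕ → ℝ) (hcbarN : ∀ k, ξ * cbar k ≤ ωN k)
    (κT : ℝ)
    (hκT : κT = 2 * κgap * Real.sqrt ς
      + (4 * κtan / κt) * (Real.log (4 * κtan / (κt * Real.sqrt ς)) - 1)) :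
    ∀ k : ℕ,
      ξ * ∑ τ ∈ (Finset.range (k + 1)).filter (· ∈ T), (ωT τ + cbar τ)
          ≤ ∑ τ ∈ (Finset.range (k + 1)).filter (· ∈ T), (ωT τ + ωN τ)
      ∧ ∑ τ ∈ (Finset.range (k + 1)).filter (· ∈ T), (ωT τ + ωN τ)
          ≤ κT * Real.sqrt (((Finset.range (k + 1)).filter (· ∈ T)).card)
              * (1 + β * η / Real.sqrt ς) := by
  intro k
  have hΓ := accum_eq_sum_filter hΓ0 hΓT hΓN
  have hΓnn (n : ℕ) : 0 ≤ Γ n := by rw [hΓ n]; positivity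
  have hψp (j : ℕ) : ψp j ≤ ψ j := by
    by_cases hj : j ∈ N
    · nlinarith [hψN j hj, hωN j]
    · exact (hψN' j hj).le
  have hκ : √(Γ (k + 1) + ς) ≤ κT := by
    rw [hκT, hκgap]
    exact sqrt_accum_add_le_of_descent hη1 hη2 hς1 hκt1 hκtan hκtς hΓ0 hΓT hΓN hα
      (fun j hj => by linarith [hψT j hj, hψp j]) (fun j hj => by linarith [hψT' j hj, hψp j])
      (k + 1) (hlow _)
  set F := (range (k + 1)).filter (· ∈ T)
  refine ⟨?_, ?_⟩
  · rw [mul_sum]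
    exact sum_le_sum fun j _ => by nlinarith [hωT j, hcbarN j]
  · have hterm (j : ℕ) (hj : j ∈ F) : ωT j + ωN j ≤ (1 + β * η / √ς) * ωT j := by
      have := mul_le_mul_of_nonneg_right
        (mul_le_mul_of_nonneg_left (stepsize_le hη1.le hς1 hΓnn hα j) hβ.le) (hωT j)
      have hsplit : (1 + β * η / √ς) * ωT j = ωT j + β * (η / √ς) * ωT j := by ring
      linarith [(hswitch j).1 (mem_filter.1 hj).2]
    calc ∑ j ∈ F, (ωT j + ωN j) ≤ ∑ j ∈ F, (1 + β * η / √ς) * ωT j := sum_le_sum hterm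
      _ = (1 + β * η / √ς) * ∑ j ∈ F, ωT j := (mul_sum _ _ _).symm
      _ ≤ (1 + β * η / √ς) * (√(#F : ℝ) * √(Γ (k + 1))) := by
        gcongr; rw [hΓ]; exact sum_le_sqrt_card_mul_sqrt_sum_sq _ _
      _ ≤ (1 + β * η / √ς) * (√(#F : ℝ) * κT) := by
        have hΓκ : √(Γ (k + 1)) ≤ κT := (sqrt_le_sqrt (by linarith)).trans hκ
        exact mul_le_mul_of_nonneg_left (mul_le_mul_of_nonneg_left hΓκ (sqrt_nonneg _))
          (by positivity)
      _ = κT * √(#F : ℝ) * (1 + β * η / √ς) := by ring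

theorem stmt16
    (η ς β κt κtan ξ : ℝ)
    (hη1 : 0 < η) (hη2 : η ≤ 1) (hς1 : 0 < ς) (hς2 : ς ≤ 1/2) (hβ : 0 < β)
    (hκt1 : 0 < κt) (hκt2 : κt ≤ 1/2) (hκtan : 0 < κtan)
    (hξ1 : 0 < ξ) (hξ2 : ξ ≤ 1)
    (hκtς : κt * Real.sqrt ς ≤ 1)
    (ωT ωN : ℕ → ℝ) (hωT : ∀ k, 0 ≤ ωT k) (hωN : ∀ k, 0 ≤ ωN k)
    (T N : Set ℕ) [DecidablePred (· ∈ T)] [DecidablePred (· ∈ N)]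
    (Γ α : ℕ → ℝ)
    (hΓ0 : Γ 0 = 0)
    (hΓT : ∀ k ∈ T, Γ (k + 1) = Γ k + ωT k ^ 2)
    (hΓN : ∀ k, k ∉ T → Γ (k + 1) = Γ k)
    (hα : ∀ k, α k = η / Real.sqrt (Γ k + ωT k ^ 2 + ς))
    (hswitch : ∀ k, k ∈ T ↔ ωN k ≤ β * α k * ωT k)
    (hTN : ∀ k, k ∉ T → k ∈ N)
    (ψ ψp : ℕ → ℝ)
    (hψN : ∀ k ∈ N, ψp k - ψ k ≤ -(η * ωN k))
    (hψN' : ∀ k, k ∉ N → ψp k = ψ k)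
    (hψT : ∀ k ∈ T, ψ (k + 1) - ψp k ≤ -(κt * α k * ωT k ^ 2) + κtan * α k ^ 2 * ωT k ^ 2)
    (hψT' : ∀ k, k ∉ T → ψ (k + 1) = ψp k)
    (ψlow : ℝ) (hlow : ∀ k, ψlow ≤ ψ k)
    (κgap : ℝ) (hκgap : κgap = (1 + ψ 0 - ψlow) / (η * κt * Real.sqrt ς))
    (cbar : ℕ → ℝ) (hcbar : ∀ k, 0 ≤ cbar k) (hcbarN : ∀ k, ξ * cbar k ≤ ωN k)
    (κT : ℝ)
    (hκT : κT = 2 * κgap * Real.sqrt ς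
      + (4 * κtan / κt) * (Real.log (4 * κtan / (κt * Real.sqrt ς)) - 1)) :
    ∀ k : ℕ,
      ξ * ∑ τ ∈ (Finset.range (k + 1)).filter (· ∈ T), (ωT τ + cbar τ)
          ≤ ∑ τ ∈ (Finset.range (k + 1)).filter (· ∈ T), (ωT τ + ωN τ)
      ∧ ∑ τ ∈ (Finset.range (k + 1)).filter (· ∈ T), (ωT τ + ωN τ)
          ≤ κT * Real.sqrt (((Finset.range (k + 1)).filter (· ∈ T)).card)
              * (1 + β * η / Real.sqrt ς) :=
  stmt16_general η ς β κt κtan ξ hη1 hη2 hς1 hβ hκt1 hκtan hξ2 hκtς ωT ωN hωT hωN T N Γ α hΓ0 hΓT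
    hΓN hα hswitch ψ ψp hψN hψN' hψT hψT' ψlow hlow κgap hκgap cbar hcbarN κT hκT
end
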